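/- arXiv:1312.7072 — 6 statements merged into one kernel-verified Lean document; each statement's English description precedes it below -/
import Mathlib

section
/- Let B be an m×n real matrix and P an n×n symmetric positive definite matrix, and set E = BP⁻¹Bᵀ. Then EE⁺B = B and E⁺EB = B, where E⁺ is the Moore-Penrose inverse of E. -/
/-!
Since `P⁻¹` is positive definite, `D * P⁻¹ * Dᵀ = 0` forces `D = 0`; taking `D = (1 - F) * B`
shows that every `F` with `F * E = E` also satisfies `F * B = B`. Both `E * Ep` and `Ep * E` fix `E`
on the left: the first by `E * Ep * E = E`, the second because symmetry of `Ep * E` and of `E` turns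
`Ep * E * E` into `(E * Ep * E)ᵀ`.
-/

open Matrix

namespace Matrix.PosDef

variable {m n R : Type*} [Fintype n] [CommRing R] [PartialOrder R] [StarRing R]
  {Q : Matrix n n R}

theorem eq_zero_of_mul_mul_conjTranspose_eq_zero (hQ : Q.PosDef) {D : Matrix m n R}
    (h : D * Q * Dᴴ = 0) : D = 0 := by
  ext i j
  by_contra hij
  have hrow : star (D i) ≠ 0 := fun h0 => hij (by simpa using congrFun h0 j)
  have hdiag : star (star (D i)) ⬝ᵥ (Q *ᵥ star (D i)) = (D * Q * Dᴴ) i i := by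
    simp only [star_star, mul_apply, dotProduct, mulVec, Finset.mul_sum, Finset.sum_mul,
      conjTranspose_apply, Pi.star_apply]
    rw [Finset.sum_comm]
    exact Finset.sum_congr rfl fun _ _ => Finset.sum_congr rfl fun _ _ => by ring
  exact (hQ.dotProduct_mulVec_pos hrow).ne' (by rw [hdiag, h, zero_apply])

theorem mul_eq_self_of_mul_mul_mul_conjTranspose [Fintype m] (hQ : Q.PosDef) {F : Matrix m m R}
    {B : Matrix m n R} (hF : F * (B * Q * Bᴴ) = B * Q * Bᴴ) : F * B = B := by
  classical
  have hD : B - F * B = (1 - F) * B := by rw [Matrix.sub_mul, Matrix.one_mul]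
  refine (sub_eq_zero.mp (hQ.eq_zero_of_mul_mul_conjTranspose_eq_zero ?_)).symm
  calc (B - F * B) * Q * (B - F * B)ᴴ = (1 - F) * (B * Q * Bᴴ) * (1 - F)ᴴ := by
        simp only [hD, conjTranspose_mul, Matrix.mul_assoc]
    _ = 0 := by rw [Matrix.sub_mul, Matrix.one_mul, hF, sub_self, Matrix.zero_mul]

end Matrix.PosDef

theorem EEpB_eq_B_general {m n : ℕ}
    (B : Matrix (Fin m) (Fin n) ℝ) (P : Matrix (Fin n) (Fin n) ℝ)
    (hP : P.PosDef)
    (E Ep : Matrix (Fin m) (Fin m) ℝ) (hE : E = B * P⁻¹ * Bᵀ)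
    (h1 : E * Ep * E = E) (h4 : (Ep * E)ᵀ = Ep * E) :
    E * Ep * B = B ∧ Ep * E * B = B := by
  have hQ : P⁻¹.PosDef := hP.inv
  rw [← conjTranspose_eq_transpose_of_trivial] at hE
  have hEsymm : Eᵀ = E := by
    rw [← conjTranspose_eq_transpose_of_trivial, hE]
    exact isHermitian_mul_mul_conjTranspose B hQ.isHermitian
  have hG : Ep * E * E = E := by
    calc Ep * E * E = (Ep * E)ᵀ * Eᵀ := by rw [h4, hEsymm]
      _ = (E * Ep * E)ᵀ := by rw [← transpose_mul, Matrix.mul_assoc]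
      _ = E := by rw [h1, hEsymm]
  subst hE
  exact ⟨hQ.mul_eq_self_of_mul_mul_mul_conjTranspose h1,
    hQ.mul_eq_self_of_mul_mul_mul_conjTranspose hG⟩

theorem EEpB_eq_B {m n : ℕ}
    (B : Matrix (Fin m) (Fin n) ℝ) (P : Matrix (Fin n) (Fin n) ℝ)
    (hP : P.PosDef)
    (E Ep : Matrix (Fin m) (Fin m) ℝ) (hE : E = B * P⁻¹ * Bᵀ)
    (h1 : E * Ep * E = E) (h2 : Ep * E * Ep = Ep)
    (h3 : (E * Ep)ᵀ = E * Ep) (h4 : (Ep * E)ᵀ = Ep * E) :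
    E * Ep * B = B ∧ Ep * E * B = B :=
  EEpB_eq_B_general B P hP E Ep hE h1 h4
end

section
/- Let W ∈ ℝ^{n×n} be positive definite (possibly nonsymmetric), B ∈ ℝ^{m×n}, P ∈ ℝ^{n×n} positive definite, and let A = [[W, Bᵀ],[−B, 0]] and M = [[P, Bᵀ],[−B, 0]] be (n+m)×(n+m) block matrices. Then MM⁺A = A, and consequently null(M⁺A) = null(A). -/
open Matrix

private lemma posdef_isUnit {k : ℕ} (P : Matrix (Fin k) (Fin k) ℝ)
    (hP : ∀ x : Fin k → ℝ, x ≠ 0 → 0 < x ⬝ᵥ P.mulVec x) : IsUnit P := by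
  rw [← Matrix.mulVec_injective_iff_isUnit]
  intro x y hxy
  by_contra hne
  have hsub : x - y ≠ 0 := sub_ne_zero.mpr hne
  have h0 : P *ᵥ (x - y) = 0 := by
    rw [Matrix.mulVec_sub, hxy, sub_self]
  have := hP (x - y) hsub
  rw [h0, dotProduct_zero] at this
  exact lt_irrefl 0 this

theorem MMpA_eq_A {n m : ℕ}
    (W P : Matrix (Fin n) (Fin n) ℝ) (B : Matrix (Fin m) (Fin n) ℝ)
    (hW : ∀ x : Fin n → ℝ, x ≠ 0 → 0 < x ⬝ᵥ W.mulVec x)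
    (hP : ∀ x : Fin n → ℝ, x ≠ 0 → 0 < x ⬝ᵥ P.mulVec x)
    (E Ep : Matrix (Fin m) (Fin m) ℝ) (hE : E = B * P⁻¹ * Bᵀ)
    (h1 : E * Ep * E = E) (h2 : Ep * E * Ep = Ep)
    (h3 : (E * Ep)ᵀ = E * Ep) (h4 : (Ep * E)ᵀ = Ep * E)
    (A M Mp : Matrix (Fin n ⊕ Fin m) (Fin n ⊕ Fin m) ℝ)
    (hA : A = fromBlocks W Bᵀ (-B) 0)
    (hM : M = fromBlocks P Bᵀ (-B) 0)
    (hMp : Mp = fromBlocks (P⁻¹ - P⁻¹ * Bᵀ * Ep * B * P⁻¹) (-(P⁻¹ * Bᵀ * Ep))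
        (Ep * B * P⁻¹) Ep) :
    M * Mp * A = A ∧
      LinearMap.ker (Mp * A).mulVecLin = LinearMap.ker A.mulVecLin := by
  -- P is invertible
  have hPunit : IsUnit P := posdef_isUnit P hP
  have hPdet : IsUnit P.det := (Matrix.isUnit_iff_isUnit_det P).mp hPunit
  have hPP' : P * P⁻¹ = 1 := Matrix.mul_nonsing_inv P hPdet
  have hP'P : P⁻¹ * P = 1 := Matrix.nonsing_inv_mul P hPdet
  -- P⁻¹ is positive definite
  have hPinv : ∀ x : Fin n → ℝ, x ≠ 0 → 0 < x ⬝ᵥ P⁻¹ *ᵥ x := by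
    intro x hx
    set y := P⁻¹ *ᵥ x with hy
    have hxy : P *ᵥ y = x := by
      rw [hy, Matrix.mulVec_mulVec, hPP', Matrix.one_mulVec]
    have hyne : y ≠ 0 := by
      intro h
      rw [h, Matrix.mulVec_zero] at hxy
      exact hx hxy.symm
    calc (0:ℝ) < y ⬝ᵥ P *ᵥ y := hP y hyne
    _ = (P *ᵥ y) ⬝ᵥ y := dotProduct_comm _ _
    _ = x ⬝ᵥ P⁻¹ *ᵥ x := by rw [hxy, ← hy]
  -- (P⁻¹)ᵀ is positive definite
  have hPinvT : ∀ x : Fin n → ℝ, x ≠ 0 → 0 < x ⬝ᵥ (P⁻¹)ᵀ *ᵥ x := by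
    intro x hx
    have : x ⬝ᵥ (P⁻¹)ᵀ *ᵥ x = x ⬝ᵥ P⁻¹ *ᵥ x := by
      rw [Matrix.dotProduct_mulVec, Matrix.vecMul_transpose, dotProduct_comm]
    rw [this]
    exact hPinv x hx
  -- key identity: E * Ep * B = B
  have hNE : (1 - E * Ep) * E = 0 := by
    rw [Matrix.sub_mul, Matrix.one_mul, h1, sub_self]
  have hNT : (1 - E * Ep)ᵀ = 1 - E * Ep := by
    rw [Matrix.transpose_sub, Matrix.transpose_one, h3]
  have hETN : Eᵀ * (1 - E * Ep) = 0 := by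
    have := congrArg Matrix.transpose hNE
    rwa [Matrix.transpose_mul, hNT, Matrix.transpose_zero] at this
  have hNBC : (1 - E * Ep) * B = B * (1 - P⁻¹ * Bᵀ * Ep * B) := by
    rw [Matrix.sub_mul, Matrix.one_mul, Matrix.mul_sub, Matrix.mul_one, hE]
    simp only [Matrix.mul_assoc]
  have hNB : (1 - E * Ep) * B = 0 := by
    have col : ∀ w : Fin n → ℝ, ((1 - E * Ep) * B) *ᵥ w = 0 := by
      intro w
      set u := ((1 - E * Ep) * B) *ᵥ w with hu
      -- Eᵀ *ᵥ u = 0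
      have hETu : Eᵀ *ᵥ u = 0 := by
        rw [hu, Matrix.mulVec_mulVec, ← Matrix.mul_assoc, hETN, Matrix.zero_mul,
          Matrix.zero_mulVec]
      -- z := Bᵀ *ᵥ u satisfies z ⬝ᵥ (P⁻¹)ᵀ *ᵥ z = 0
      have hET : Eᵀ = B * ((P⁻¹)ᵀ * Bᵀ) := by
        rw [hE]
        simp only [Matrix.transpose_mul, Matrix.transpose_transpose, Matrix.mul_assoc]
      have hBdot : ∀ c : Fin n → ℝ, (B *ᵥ c) ⬝ᵥ u = c ⬝ᵥ (Bᵀ *ᵥ u) := by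
        intro c
        rw [dotProduct_comm, Matrix.dotProduct_mulVec (R := ℝ) u B,
          ← Matrix.mulVec_transpose, dotProduct_comm]
      have hquad : (Bᵀ *ᵥ u) ⬝ᵥ (P⁻¹)ᵀ *ᵥ (Bᵀ *ᵥ u) = 0 := by
        have h0 : u ⬝ᵥ Eᵀ *ᵥ u = 0 := by rw [hETu, dotProduct_zero]
        rw [hET, ← Matrix.mulVec_mulVec, ← Matrix.mulVec_mulVec,
          Matrix.dotProduct_mulVec (R := ℝ) u B, ← Matrix.mulVec_transpose] at h0
        exact h0
      have hz0 : Bᵀ *ᵥ u = 0 := by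
        by_contra hzne
        exact absurd hquad (ne_of_gt (hPinvT _ hzne))
      -- u is in the column space of B, so u = 0
      have huB : u = B *ᵥ ((1 - P⁻¹ * Bᵀ * Ep * B) *ᵥ w) := by
        rw [hu, hNBC, ← Matrix.mulVec_mulVec]
      have huu : u ⬝ᵥ u = 0 := by
        nth_rewrite 1 [huB]
        rw [hBdot, hz0, dotProduct_zero]
      exact dotProduct_self_eq_zero.mp huu
    ext i j
    have := congrFun (col (Pi.single j 1)) i
    simpa using this
  have hEEpB : E * Ep * B = B := by
    have := sub_eq_zero.mp (by rwa [Matrix.sub_mul, Matrix.one_mul] at hNB)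
    linear_combination (norm := module) -this
  -- helper : P * (P⁻¹ * X) = X
  have cancel : ∀ {k : ℕ} (X : Matrix (Fin n) (Fin k) ℝ), P * (P⁻¹ * X) = X := by
    intro k X
    rw [← Matrix.mul_assoc, hPP', Matrix.one_mul]
  -- compute M * Mp
  have hEEpB' : B * (P⁻¹ * (Bᵀ * (Ep * B))) = B := by
    have := hEEpB
    rw [hE] at this
    simpa only [Matrix.mul_assoc] using this
  have hTL : P * (P⁻¹ - P⁻¹ * Bᵀ * Ep * B * P⁻¹) + Bᵀ * (Ep * B * P⁻¹) = 1 := by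
    rw [Matrix.mul_sub, hPP']
    have h : P * (P⁻¹ * Bᵀ * Ep * B * P⁻¹) = Bᵀ * (Ep * B * P⁻¹) := by
      simp only [Matrix.mul_assoc]
      rw [cancel]
    rw [h]
    abel
  have hTR : P * -(P⁻¹ * Bᵀ * Ep) + Bᵀ * Ep = 0 := by
    rw [Matrix.mul_neg]
    have h : P * (P⁻¹ * Bᵀ * Ep) = Bᵀ * Ep := by
      simp only [Matrix.mul_assoc]
      rw [cancel]
    rw [h]
    abel
  have hBL : -B * (P⁻¹ - P⁻¹ * Bᵀ * Ep * B * P⁻¹) + (0 : Matrix (Fin m) (Fin m) ℝ) * (Ep * B * P⁻¹) = 0 := by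
    rw [Matrix.zero_mul, add_zero, Matrix.neg_mul, Matrix.mul_sub, neg_eq_zero, sub_eq_zero]
    calc B * P⁻¹ = (B * (P⁻¹ * (Bᵀ * (Ep * B)))) * P⁻¹ := by rw [hEEpB']
      _ = B * (P⁻¹ * Bᵀ * Ep * B * P⁻¹) := by simp only [Matrix.mul_assoc]
  have hBR : -B * -(P⁻¹ * Bᵀ * Ep) + 0 * Ep = E * Ep := by
    rw [Matrix.zero_mul, add_zero, Matrix.neg_mul, Matrix.mul_neg, neg_neg, hE]
    simp only [Matrix.mul_assoc]
  have hMMp : M * Mp = fromBlocks 1 0 0 (E * Ep) := by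
    rw [hM, hMp, Matrix.fromBlocks_multiply, hTL, hTR, hBL, hBR]
  -- conclude M * Mp * A = A
  have hmain : M * Mp * A = A := by
    rw [hMMp, hA, Matrix.fromBlocks_multiply]
    simp only [Matrix.one_mul, Matrix.zero_mul, Matrix.mul_zero, add_zero, zero_add,
      neg_zero, Matrix.mul_neg, hEEpB]
  refine ⟨hmain, ?_⟩
  ext x
  simp only [LinearMap.mem_ker, Matrix.mulVecLin_apply]
  constructor
  · intro h
    have : A *ᵥ x = (M * (Mp * A)) *ᵥ x := by rw [← Matrix.mul_assoc, hmain]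
    rw [this, ← Matrix.mulVec_mulVec, h, Matrix.mulVec_zero]
  · intro h
    rw [← Matrix.mulVec_mulVec, h, Matrix.mulVec_zero]
end

section
/- With A and M the singular saddle-point matrix and constraint preconditioner as above (W positive definite, P positive definite, B possibly rank deficient), the null space of (M⁺A)² equals the null space of M⁺A; equivalently, the iteration matrix T = I − M⁺A satisfies rank(I − T) = rank((I − T)²), i.e., index(I − T) = 1. -/
open Matrix

private lemma ker_saddle {n m : ℕ} (Q : Matrix (Fin n) (Fin n) ℝ)
    (C : Matrix (Fin m) (Fin n) ℝ)
    (hQ : ∀ x : Fin n → ℝ, x ≠ 0 → 0 < x ⬝ᵥ Q.mulVec x) (v : Fin n ⊕ Fin m → ℝ) :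
    (fromBlocks Q Cᵀ (-C) 0) *ᵥ v = 0 ↔
      (v ∘ Sum.inl = 0 ∧ Cᵀ *ᵥ (v ∘ Sum.inr) = 0) := by
  rw [fromBlocks_mulVec]
  constructor
  · intro h
    have h1 : Q *ᵥ (v ∘ Sum.inl) + Cᵀ *ᵥ (v ∘ Sum.inr) = 0 := by
      funext i; exact congrFun h (Sum.inl i)
    have h2 : (-C) *ᵥ (v ∘ Sum.inl) + (0 : Matrix (Fin m) (Fin m) ℝ) *ᵥ (v ∘ Sum.inr) = 0 := by
      funext i; exact congrFun h (Sum.inr i)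
    rw [zero_mulVec, add_zero, neg_mulVec, neg_eq_zero] at h2
    have hx : v ∘ Sum.inl = 0 := by
      by_contra hx
      have hpos := hQ _ hx
      have hzero : (v ∘ Sum.inl) ⬝ᵥ (Cᵀ *ᵥ (v ∘ Sum.inr)) = 0 := by
        rw [dotProduct_mulVec, vecMul_transpose, h2, zero_dotProduct]
      have hsum := congrArg (fun w => (v ∘ Sum.inl) ⬝ᵥ w) h1
      simp only [dotProduct_add, dotProduct_zero, hzero, add_zero] at hsum
      rw [hsum] at hpos
      exact lt_irrefl 0 hpos
    refine ⟨hx, ?_⟩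
    rw [hx, mulVec_zero, zero_add] at h1
    exact h1
  · rintro ⟨hx, hy⟩
    funext i
    cases i with
    | inl i =>
      simp only [Sum.elim_inl, hx, mulVec_zero, zero_add, hy]
      rfl
    | inr i =>
      simp only [Sum.elim_inr, hx, mulVec_zero, zero_mulVec, add_zero]
      rfl

theorem index_one {n m : ℕ}
    (W P : Matrix (Fin n) (Fin n) ℝ) (B : Matrix (Fin m) (Fin n) ℝ)
    (hW : ∀ x : Fin n → ℝ, x ≠ 0 → 0 < x ⬝ᵥ W.mulVec x)
    (hP : ∀ x : Fin n → ℝ, x ≠ 0 → 0 < x ⬝ᵥ P.mulVec x)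
    (A M Mp : Matrix (Fin n ⊕ Fin m) (Fin n ⊕ Fin m) ℝ)
    (hA : A = fromBlocks W Bᵀ (-B) 0)
    (hM : M = fromBlocks P Bᵀ (-B) 0)
    (h1 : M * Mp * M = M) (h2 : Mp * M * Mp = Mp)
    (h3 : (M * Mp)ᵀ = M * Mp) (h4 : (Mp * M)ᵀ = Mp * M)
    (T : Matrix (Fin n ⊕ Fin m) (Fin n ⊕ Fin m) ℝ) (hT : T = 1 - Mp * A) :
    LinearMap.ker ((Mp * A) * (Mp * A)).mulVecLin = LinearMap.ker (Mp * A).mulVecLin ∧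
      (1 - T).rank = ((1 - T) ^ 2).rank := by
  -- transposes of A and M have the saddle form as well
  have hWt : ∀ x : Fin n → ℝ, x ≠ 0 → 0 < x ⬝ᵥ Wᵀ.mulVec x := by
    intro x hx
    have : x ⬝ᵥ Wᵀ *ᵥ x = x ⬝ᵥ W *ᵥ x := by
      rw [dotProduct_mulVec, vecMul_transpose, dotProduct_comm]
    rw [this]; exact hW x hx
  have hPt : ∀ x : Fin n → ℝ, x ≠ 0 → 0 < x ⬝ᵥ Pᵀ.mulVec x := by
    intro x hx
    have : x ⬝ᵥ Pᵀ *ᵥ x = x ⬝ᵥ P *ᵥ x := by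
      rw [dotProduct_mulVec, vecMul_transpose, dotProduct_comm]
    rw [this]; exact hP x hx
  have hAt : Aᵀ = fromBlocks Wᵀ (-B)ᵀ (-(-B)) 0 := by
    rw [hA, fromBlocks_transpose, transpose_transpose, transpose_zero, neg_neg]
  have hMt : Mᵀ = fromBlocks Pᵀ (-B)ᵀ (-(-B)) 0 := by
    rw [hM, fromBlocks_transpose, transpose_transpose, transpose_zero, neg_neg]
  -- kernel characterizations
  have kerA : ∀ v, A *ᵥ v = 0 ↔ (v ∘ Sum.inl = 0 ∧ Bᵀ *ᵥ (v ∘ Sum.inr) = 0) := by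
    intro v; rw [hA]; exact ker_saddle W B hW v
  have kerM : ∀ v, M *ᵥ v = 0 ↔ (v ∘ Sum.inl = 0 ∧ Bᵀ *ᵥ (v ∘ Sum.inr) = 0) := by
    intro v; rw [hM]; exact ker_saddle P B hP v
  have negBt : ∀ y : Fin m → ℝ, ((-B)ᵀ *ᵥ y = 0 ↔ Bᵀ *ᵥ y = 0) := by
    intro y; rw [transpose_neg, neg_mulVec, neg_eq_zero]
  have kerAt : ∀ v, Aᵀ *ᵥ v = 0 ↔ (v ∘ Sum.inl = 0 ∧ Bᵀ *ᵥ (v ∘ Sum.inr) = 0) := by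
    intro v; rw [hAt, ker_saddle Wᵀ (-B) hWt v, negBt]
  have kerMt : ∀ v, Mᵀ *ᵥ v = 0 ↔ (v ∘ Sum.inl = 0 ∧ Bᵀ *ᵥ (v ∘ Sum.inr) = 0) := by
    intro v; rw [hMt, ker_saddle Pᵀ (-B) hPt v, negBt]
  -- Moore-Penrose identities
  have hMpMt : Mᵀ = Mᵀ * M * Mp := by
    conv_lhs => rw [← h1]
    rw [transpose_mul, transpose_mul, ← transpose_mul, h3, ← mul_assoc]
  -- ker Mp ⊆ ker Mᵀ
  have kMpMt : ∀ z, Mp *ᵥ z = 0 → Mᵀ *ᵥ z = 0 := by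
    intro z hz
    rw [hMpMt, ← mulVec_mulVec, ← mulVec_mulVec, hz, mulVec_zero, mulVec_zero]
  -- main kernel statement
  have key : ∀ v, (Mp * A) *ᵥ ((Mp * A) *ᵥ v) = 0 → (Mp * A) *ᵥ v = 0 := by
    intro v hv
    set u : Fin n ⊕ Fin m → ℝ := (Mp * A) *ᵥ v with hu
    have h5 : Mp *ᵥ (A *ᵥ u) = 0 := by
      rw [mulVec_mulVec]; exact hv
    have h6 : Mᵀ *ᵥ (A *ᵥ u) = 0 := kMpMt _ h5
    have h7 : Aᵀ *ᵥ (A *ᵥ u) = 0 := (kerAt _).2 ((kerMt _).1 h6)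
    have h8 : A *ᵥ u = 0 := by
      have : (A *ᵥ u) ⬝ᵥ (A *ᵥ u) = 0 := by
        rw [dotProduct_mulVec, ← mulVec_transpose, h7, zero_dotProduct]
      exact dotProduct_self_eq_zero.1 this
    have h9 : M *ᵥ u = 0 := (kerM _).2 ((kerA _).1 h8)
    have h10 : u = Mp *ᵥ (M *ᵥ u) := by
      rw [hu, mulVec_mulVec, mulVec_mulVec, ← mul_assoc, h2]
    rw [hu] at h10 ⊢
    rw [h10, h9, mulVec_zero]
  have kerEq : LinearMap.ker ((Mp * A) * (Mp * A)).mulVecLin =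
      LinearMap.ker (Mp * A).mulVecLin := by
    ext v
    simp only [LinearMap.mem_ker, mulVecLin_apply]
    constructor
    · intro h
      exact key v (by rw [mulVec_mulVec]; exact h)
    · intro h
      rw [← mulVec_mulVec, h, mulVec_zero]
  refine ⟨kerEq, ?_⟩
  have h1T : 1 - T = Mp * A := by rw [hT, sub_sub_cancel]
  have h2T : (1 - T) ^ 2 = (Mp * A) * (Mp * A) := by rw [sq, h1T]
  rw [h2T, h1T]
  have r1 := LinearMap.finrank_range_add_finrank_ker ((Mp * A) * (Mp * A)).mulVecLin
  have r2 := LinearMap.finrank_range_add_finrank_ker (Mp * A).mulVecLin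
  rw [kerEq] at r1
  unfold Matrix.rank
  omega
end

section
/- Let P be an n×n symmetric positive definite matrix, B ∈ ℝ^{m×n}, E = BP⁻¹Bᵀ, and X = P⁻¹ − P⁻¹BᵀE⁺BP⁻¹. Then the matrix P^{1/2}XP^{1/2} = I − P^{−1/2}BᵀE⁺BP^{−1/2} is a symmetric projection (idempotent). -/
/-!
With `R = P^{1/2}` and `C = B R⁻¹` one has `E = C Cᵀ` and `R X R = 1 - Cᵀ E⁺ C`. The
Moore–Penrose inverse is unique, and `(E⁺)ᵀ` is a Moore–Penrose inverse of `Eᵀ = E`, so `E⁺` is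
symmetric; hence `Cᵀ E⁺ C` is symmetric, and it is idempotent because `E⁺ (C Cᵀ) E⁺ = E⁺`. Its
complement `1 - Cᵀ E⁺ C` is then a symmetric idempotent as well.
-/

open Matrix

open scoped ComplexOrder in
/-- The square root of a positive semidefinite matrix, as defined in the older Mathlib
(removed from current Mathlib). -/
noncomputable def Matrix.PosSemidef.sqrt {n : Type*} [Fintype n] [DecidableEq n]
    {𝕜 : Type*} [RCLike 𝕜] {A : Matrix n n 𝕜} (hA : A.PosSemidef) : Matrix n n 𝕜 :=
  hA.1.eigenvectorUnitary.1 * diagonal ((↑) ∘ (√·) ∘ hA.1.eigenvalues) *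
    (star hA.1.eigenvectorUnitary : Matrix n n 𝕜)

namespace Matrix.PosSemidef

open scoped ComplexOrder

variable {n 𝕜 : Type*} [Fintype n] [DecidableEq n] [RCLike 𝕜] {A : Matrix n n 𝕜}

theorem sqrt_mul_self (hA : A.PosSemidef) : hA.sqrt * hA.sqrt = A := by
  have hD : diagonal ((↑) ∘ (√·) ∘ hA.1.eigenvalues) * diagonal ((↑) ∘ (√·) ∘ hA.1.eigenvalues)
      = diagonal (RCLike.ofReal ∘ hA.1.eigenvalues : n → 𝕜) := by
    rw [diagonal_mul_diagonal]
    congr 1; funext i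
    simp [← RCLike.ofReal_mul, Real.mul_self_sqrt (hA.eigenvalues_nonneg i)]
  conv_rhs => rw [hA.1.spectral_theorem, Unitary.conjStarAlgAut_apply]
  simp only [sqrt, Matrix.mul_assoc]
  rw [← Matrix.mul_assoc (star (hA.1.eigenvectorUnitary : Matrix n n 𝕜)),
    Unitary.coe_star_mul_self, Matrix.one_mul, ← Matrix.mul_assoc (diagonal _), hD]

theorem isHermitian_sqrt (hA : A.PosSemidef) : hA.sqrt.IsHermitian :=
  isHermitian_mul_mul_conjTranspose _ (isHermitian_diagonal_of_self_adjoint _ (by ext i; simp))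

end Matrix.PosSemidef

structure IsMoorePenroseInverse {M : Type*} [Mul M] [Star M] (A X : M) : Prop where
  mul_inv_mul : A * X * A = A
  inv_mul_inv : X * A * X = X
  isSelfAdjoint_mul_inv : IsSelfAdjoint (A * X)
  isSelfAdjoint_inv_mul : IsSelfAdjoint (X * A)

namespace IsMoorePenroseInverse

variable {M : Type*} [Monoid M] [StarMul M] {A X Y : M}

protected theorem star (h : IsMoorePenroseInverse A X) :
    IsMoorePenroseInverse (star A) (star X) where
  mul_inv_mul := by rw [← star_mul, ← star_mul, ← mul_assoc, h.mul_inv_mul]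
  inv_mul_inv := by rw [← star_mul, ← star_mul, ← mul_assoc, h.inv_mul_inv]
  isSelfAdjoint_mul_inv := by
    rw [← star_mul]; exact IsSelfAdjoint.star_iff.mpr h.isSelfAdjoint_inv_mul
  isSelfAdjoint_inv_mul := by
    rw [← star_mul]; exact IsSelfAdjoint.star_iff.mpr h.isSelfAdjoint_mul_inv

theorem eq (hX : IsMoorePenroseInverse A X) (hY : IsMoorePenroseInverse A Y) : X = Y := by
  have hAX := hX.isSelfAdjoint_mul_inv.star_eq
  have hXA := hX.isSelfAdjoint_inv_mul.star_eq
  have hAY := hY.isSelfAdjoint_mul_inv.star_eq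
  have hYA := hY.isSelfAdjoint_inv_mul.star_eq
  have hX' : X = X * A * Y :=
    calc X = X * star (A * X) := by rw [hAX, ← mul_assoc, hX.inv_mul_inv]
      _ = X * (star X * star (A * Y * A)) := by rw [hY.mul_inv_mul, star_mul]
      _ = X * (star (A * X) * star (A * Y)) := by simp only [star_mul, mul_assoc]
      _ = X * A * Y := by rw [hAX, hAY, ← mul_assoc, ← mul_assoc X, hX.inv_mul_inv, mul_assoc]
  have hY' : Y = X * A * Y :=
    calc Y = star (Y * A) * Y := by rw [hYA, hY.inv_mul_inv]
      _ = star (A * X * A) * star Y * Y := by rw [hX.mul_inv_mul, star_mul]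
      _ = star (X * A) * star (Y * A) * Y := by simp only [star_mul, mul_assoc]
      _ = X * A * Y := by rw [hXA, hYA, mul_assoc, mul_assoc, hY.inv_mul_inv, mul_assoc]
  exact hX'.trans hY'.symm

theorem isSelfAdjoint (h : IsMoorePenroseInverse A X) (hA : IsSelfAdjoint A) :
    IsSelfAdjoint X :=
  (hA.star_eq ▸ h.star).eq h

end IsMoorePenroseInverse

namespace Matrix

variable {m n α : Type*} [Fintype m]

theorem isIdempotentElem_mul_mul [Fintype n] [Semiring α] {C : Matrix m n α} {D : Matrix n m α}
    {G : Matrix m m α} (h : G * (C * D) * G = G) : IsIdempotentElem (D * G * C) :=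
  calc D * G * C * (D * G * C) = D * (G * (C * D) * G) * C := by simp only [Matrix.mul_assoc]
    _ = D * G * C := by rw [h]

theorem isSymm_transpose_mul_mul [CommSemiring α] {G : Matrix m m α} (hG : G.IsSymm)
    (C : Matrix m n α) : (Cᵀ * G * C).IsSymm := by
  simp only [IsSymm, transpose_mul, transpose_transpose, hG.eq, Matrix.mul_assoc]

theorem mul_inv_sub_mul_eq_of_mul_self_eq [Fintype n] [CommRing α] [DecidableEq n]
    {R P : Matrix n n α} (hRR : R * R = P) (hR : IsUnit R)
    (D : Matrix n m α) (G : Matrix m m α) (C : Matrix m n α) :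
    R * (P⁻¹ - P⁻¹ * D * G * C * P⁻¹) * R = 1 - R⁻¹ * D * G * C * R⁻¹ := by
  have hdet := (isUnit_iff_isUnit_det R).mp hR
  have hRP : R * P⁻¹ = R⁻¹ := by
    rw [← hRR, mul_inv_rev, ← Matrix.mul_assoc, mul_nonsing_inv _ hdet, Matrix.one_mul]
  have hPR : P⁻¹ * R = R⁻¹ := by
    rw [← hRR, mul_inv_rev, Matrix.mul_assoc, nonsing_inv_mul _ hdet, Matrix.mul_one]
  rw [Matrix.mul_sub, Matrix.sub_mul, hRP, nonsing_inv_mul _ hdet]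
  simp only [← Matrix.mul_assoc, hRP]
  rw [Matrix.mul_assoc _ P⁻¹ R, hPR]

end Matrix

theorem sym_projection {m n : ℕ}
    (P : Matrix (Fin n) (Fin n) ℝ) (hP : P.PosDef)
    (B : Matrix (Fin m) (Fin n) ℝ)
    (E Ep : Matrix (Fin m) (Fin m) ℝ) (hE : E = B * P⁻¹ * Bᵀ)
    (h1 : E * Ep * E = E) (h2 : Ep * E * Ep = Ep)
    (h3 : (E * Ep)ᵀ = E * Ep) (h4 : (Ep * E)ᵀ = Ep * E)
    (X : Matrix (Fin n) (Fin n) ℝ)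
    (hX : X = P⁻¹ - P⁻¹ * Bᵀ * Ep * B * P⁻¹)
    (R : Matrix (Fin n) (Fin n) ℝ) (hR : R = hP.posSemidef.sqrt) :
    R * X * R = 1 - R⁻¹ * Bᵀ * Ep * B * R⁻¹ ∧
    (R * X * R)ᵀ = R * X * R ∧
    (R * X * R) * (R * X * R) = R * X * R := by
  have hRR : R * R = P := hR ▸ hP.posSemidef.sqrt_mul_self
  have hRsymm : R.IsSymm := isHermitian_iff_isSymm.mp (hR ▸ hP.posSemidef.isHermitian_sqrt)
  have hRunit : IsUnit R := isUnit_of_mul_isUnit_left (hRR ▸ hP.isUnit)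
  set C := B * R⁻¹
  have hCC : C * Cᵀ = E := by
    rw [hE, ← hRR, Matrix.mul_inv_rev, transpose_mul, hRsymm.inv.eq]
    simp only [C, Matrix.mul_assoc]
  have hQ : R⁻¹ * Bᵀ * Ep * B * R⁻¹ = Cᵀ * Ep * C := by
    simp only [C, transpose_mul, hRsymm.inv.eq, Matrix.mul_assoc]
  have hEp : Ep.IsSymm := by
    have hMP : IsMoorePenroseInverse E Ep :=
      ⟨h1, h2, isHermitian_iff_isSymm.mpr h3, isHermitian_iff_isSymm.mpr h4⟩
    have hEsymm : E.IsSymm := by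
      rw [hE]
      simpa using isSymm_transpose_mul_mul (isHermitian_iff_isSymm.mp hP.isHermitian).inv Bᵀ
    exact isHermitian_iff_isSymm.mp (hMP.isSelfAdjoint (isHermitian_iff_isSymm.mpr hEsymm))
  have hRXR : R * X * R = 1 - R⁻¹ * Bᵀ * Ep * B * R⁻¹ :=
    hX ▸ mul_inv_sub_mul_eq_of_mul_self_eq hRR hRunit _ _ _
  refine ⟨hRXR, ?_, ?_⟩ <;> rw [hRXR, hQ]
  · exact (isSymm_one.sub (isSymm_transpose_mul_mul hEp C)).eq
  · exact (isIdempotentElem_mul_mul (by rwa [hCC])).one_sub.eq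
end

section
/- Let H be an n×n symmetric positive definite matrix and S an n×n skew-symmetric matrix, and let ω > (1/2)(1 + ρ(H^{−1/2}SH^{−1/2})²). Then every eigenvalue λ of the matrix (1 − 1/ω)I − (1/ω)H^{−1/2}SH^{−1/2} satisfies |λ| < 1. -/
open Matrix

/-- `μ : ℂ` is an eigenvalue of the real matrix `K`. -/
def HasCEigenvalue {n : ℕ} (K : Matrix (Fin n) (Fin n) ℝ) (μ : ℂ) : Prop :=
  ∃ v : Fin n → ℂ, v ≠ 0 ∧ (K.map (Complex.ofReal)).mulVec v = μ • v

/-- The spectral radius of a real matrix, as the supremum of the moduli of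
its complex eigenvalues. -/
noncomputable def specRadius {n : ℕ} (K : Matrix (Fin n) (Fin n) ℝ) : ℝ :=
  sSup {r : ℝ | ∃ μ : ℂ, HasCEigenvalue K μ ∧ r = ‖μ‖}

/-!
With `R = H^{1/2}` symmetric, `T = R⁻¹ S R⁻¹` is again skew-symmetric, so each eigenvalue `ν`
of `T` is purely imaginary with `|ν| ≤ ρ(T)`. An eigenvalue of `(1 - 1/ω) I - (1/ω) T` has the
form `μ = (ω - 1 - ν) / ω`, and since `ν ⊥ ω - 1` in `ℂ`,
`|ω μ|² = (ω - 1)² + |ν|² ≤ (ω - 1)² + ρ(T)² < ω²` exactly when `ω > (1 + ρ(T)²) / 2`.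
-/

namespace Matrix

variable {ι : Type*} [Fintype ι] [DecidableEq ι]

theorem isSymm_mul_diagonal_mul_star (U : Matrix ι ι ℝ) (d : ι → ℝ) :
    (U * diagonal d * star U).IsSymm := by
  simp [IsSymm, transpose_mul, Matrix.mul_assoc, star_eq_conjTranspose,
    conjTranspose_eq_transpose_of_trivial]

theorem transpose_inv_mul_mul_inv_of_isSymm {R S : Matrix ι ι ℝ} (hR : R.IsSymm)
    (hS : Sᵀ = -S) : (R⁻¹ * S * R⁻¹)ᵀ = -(R⁻¹ * S * R⁻¹) := by
  rw [transpose_mul, transpose_mul, transpose_nonsing_inv, hR.eq, hS]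
  simp [Matrix.mul_assoc]

end Matrix

namespace HasCEigenvalue

variable {n : ℕ} {K : Matrix (Fin n) (Fin n) ℝ}

section

attribute [local instance] Matrix.linftyOpNormedAddCommGroup Matrix.linftyOpNormedRing

theorem norm_le_norm_map_ofReal {μ : ℂ} (h : HasCEigenvalue K μ) :
    ‖μ‖ ≤ ‖K.map Complex.ofReal‖ := by
  obtain ⟨v, hv, hKv⟩ := h
  have hbound := linfty_opNorm_mulVec (K.map Complex.ofReal) v
  rw [hKv, norm_smul] at hbound
  exact le_of_mul_le_mul_right hbound (norm_pos_iff.mpr hv)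

theorem bddAbove_norm (K : Matrix (Fin n) (Fin n) ℝ) :
    BddAbove {r : ℝ | ∃ μ : ℂ, HasCEigenvalue K μ ∧ r = ‖μ‖} :=
  ⟨‖K.map Complex.ofReal‖, by rintro r ⟨μ, hμ, rfl⟩; exact hμ.norm_le_norm_map_ofReal⟩

end

theorem norm_le_specRadius {μ : ℂ} (h : HasCEigenvalue K μ) : ‖μ‖ ≤ specRadius K :=
  le_csSup (bddAbove_norm K) ⟨μ, h, rfl⟩

open scoped ComplexOrder in
/-- Rayleigh quotient: `v* M v = ν v* v` while `(v* M v)^* = v* Mᴴ v = -v* M v`. -/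
theorem re_eq_zero_of_transpose_eq_neg (hK : Kᵀ = -K) {ν : ℂ} (h : HasCEigenvalue K ν) :
    ν.re = 0 := by
  obtain ⟨v, hv, hKv⟩ := h
  set M := K.map Complex.ofReal
  have hM : Mᴴ = -M := by
    ext i j
    simpa [M, conjTranspose_apply] using congrArg Complex.ofReal (congrFun (congrFun hK i) j)
  have hvv : star v ⬝ᵥ v ≠ 0 := fun h => hv (dotProduct_star_self_eq_zero.mp h)
  have hstar : star ν * (star v ⬝ᵥ v) = -ν * (star v ⬝ᵥ v) :=
    calc star ν * (star v ⬝ᵥ v) = star (ν • v) ⬝ᵥ v := by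
          simp [star_smul, smul_dotProduct]
      _ = (star v ᵥ* Mᴴ) ⬝ᵥ v := by rw [← hKv, star_mulVec]
      _ = -(star v ⬝ᵥ (M *ᵥ v)) := by rw [hM, vecMul_neg, neg_dotProduct, dotProduct_mulVec]
      _ = -ν * (star v ⬝ᵥ v) := by rw [hKv, dotProduct_smul, smul_eq_mul, neg_mul]
  have hconj : star ν = -ν := mul_right_cancel₀ hvv hstar
  have hre := congrArg Complex.re hconj
  simp only [Complex.star_def, Complex.conj_re, Complex.neg_re] at hre
  linarith

theorem of_smul_one_sub_smul {a c : ℝ} (hc : c ≠ 0) {μ : ℂ}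
    (h : HasCEigenvalue (a • (1 : Matrix (Fin n) (Fin n) ℝ) - c • K) μ) :
    HasCEigenvalue K ((a - μ) / c) := by
  obtain ⟨v, hv, hKv⟩ := h
  refine ⟨v, hv, ?_⟩
  have hmap : (a • (1 : Matrix (Fin n) (Fin n) ℝ) - c • K).map Complex.ofReal
      = (a : ℂ) • (1 : Matrix (Fin n) (Fin n) ℂ) - (c : ℂ) • K.map Complex.ofReal := by
    ext i j
    by_cases hij : i = j <;> simp [one_apply, hij]
  rw [hmap, sub_mulVec, smul_mulVec, smul_mulVec, one_mulVec] at hKv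
  have hc' : (c : ℂ) ≠ 0 := Complex.ofReal_ne_zero.mpr hc
  calc K.map Complex.ofReal *ᵥ v = (c : ℂ)⁻¹ • ((c : ℂ) • K.map Complex.ofReal *ᵥ v) := by
        rw [smul_smul, inv_mul_cancel₀ hc', one_smul]
    _ = (c : ℂ)⁻¹ • ((a : ℂ) • v - μ • v) := by rw [← hKv]; abel_nf
    _ = ((a - μ) / c) • v := by rw [← sub_smul, smul_smul, div_eq_inv_mul]

end HasCEigenvalue

theorem Complex.norm_sub_div_lt_one_of_re_eq_zero {ω : ℝ} {ν : ℂ} (hν : ν.re = 0)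
    (hω : ‖ν‖ ^ 2 < 2 * ω - 1) : ‖((ω : ℂ) - 1 - ν) / ω‖ < 1 := by
  have hω0 : 0 < ω := by nlinarith [norm_nonneg ν]
  have hnum : ‖(ω : ℂ) - 1 - ν‖ ^ 2 = (ω - 1) ^ 2 + ‖ν‖ ^ 2 := by
    simp only [Complex.sq_norm, Complex.normSq_apply, Complex.sub_re, Complex.sub_im,
      Complex.ofReal_re, Complex.ofReal_im, Complex.one_re, Complex.one_im, hν]
    ring
  rw [norm_div, Complex.norm_real, Real.norm_of_nonneg hω0.le, div_lt_one hω0]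
  nlinarith [norm_nonneg ((ω : ℂ) - 1 - ν)]

theorem gcp_symmetric_convergence {n : ℕ}
    (H S : Matrix (Fin n) (Fin n) ℝ) (hH : H.PosDef) (hS : Sᵀ = -S)
    (T : Matrix (Fin n) (Fin n) ℝ)
    (hT : T = (hH.posSemidef.1.eigenvectorUnitary.1 * diagonal ((↑) ∘ (Real.sqrt ∘ hH.posSemidef.1.eigenvalues)) * (star hH.posSemidef.1.eigenvectorUnitary : Matrix (Fin n) (Fin n) ℝ))⁻¹ * S * (hH.posSemidef.1.eigenvectorUnitary.1 * diagonal ((↑) ∘ (Real.sqrt ∘ hH.posSemidef.1.eigenvalues)) * (star hH.posSemidef.1.eigenvectorUnitary : Matrix (Fin n) (Fin n) ℝ))⁻¹)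
    (ω : ℝ) (hω : ω > (1 / 2) * (1 + specRadius T ^ 2)) :
    ∀ μ : ℂ, HasCEigenvalue ((1 - 1 / ω) • (1 : Matrix (Fin n) (Fin n) ℝ) - (1 / ω) • T) μ →
      ‖μ‖ < 1 := by
  intro μ hμ
  have hTskew : Tᵀ = -T := hT ▸ transpose_inv_mul_mul_inv_of_isSymm
    (isSymm_mul_diagonal_mul_star _ _) hS
  have hω0 : ω ≠ 0 := by nlinarith [sq_nonneg (specRadius T)]
  set ν : ℂ := ((1 - 1 / ω : ℝ) - μ) / (1 / ω : ℝ)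
  have hν : HasCEigenvalue T ν := hμ.of_smul_one_sub_smul (one_div_ne_zero hω0)
  have hμν : μ = ((ω : ℂ) - 1 - ν) / ω := by
    have : (ω : ℂ) ≠ 0 := Complex.ofReal_ne_zero.mpr hω0
    simp only [ν]
    push_cast
    field_simp
    ring
  rw [hμν]
  refine Complex.norm_sub_div_lt_one_of_re_eq_zero (hν.re_eq_zero_of_transpose_eq_neg hTskew) ?_
  nlinarith [hν.norm_le_specRadius, norm_nonneg ν]
end

section
/- Let S be an n×n real skew-symmetric matrix with strictly lower triangular part L_s and strictly upper triangular part U_s = −L_sᵀ (so S = L_s + U_s), and let ω > 0. Then the matrix P = (1/ω)(I + ωL_s)(I + ωU_s) is positive definite (xᵀPx > 0 for all x ≠ 0) if and only if ω < 1/‖L_s‖₂, where ‖·‖₂ is the spectral norm. -/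
/-!
Expanding the product, `P = ω⁻¹ • 1 + (L - Lᵀ) - ω • L * Lᵀ`. The skew part `L - Lᵀ` does not
contribute to the quadratic form, so `xᵀ P x = ω⁻¹ ‖x‖² - ω ‖Lᵀ x‖²`, which is positive for all
`x ≠ 0` iff `‖Lᵀ x‖ < ω⁻¹ ‖x‖` for all `x ≠ 0`. In finite dimension the operator norm is attained
on the unit sphere, so this is equivalent to `‖L‖ = ‖Lᵀ‖ < ω⁻¹`.
-/

open Matrix

/-- The spectral norm (largest singular value) of a real square matrix. -/
noncomputable def l2OpNorm {n : ℕ} (L : Matrix (Fin n) (Fin n) ℝ) : ℝ :=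
  ‖Matrix.toEuclideanCLM (𝕜 := ℝ) L‖

open scoped Matrix.Norms.L2Operator

namespace ContinuousLinearMap

variable {𝕜 E F : Type*} [RCLike 𝕜] [NormedAddCommGroup E] [NormedSpace 𝕜 E]
  [FiniteDimensional 𝕜 E] [NormedAddCommGroup F] [NormedSpace 𝕜 F]

theorem exists_norm_eq_one_norm_apply_eq_opNorm [Nontrivial E] (T : E →L[𝕜] F) :
    ∃ x : E, ‖x‖ = 1 ∧ ‖T x‖ = ‖T‖ := by
  have := FiniteDimensional.proper_rclike 𝕜 E
  obtain ⟨x, hx, hmax⟩ := (isCompact_sphere (0 : E) 1).exists_isMaxOn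
    (Set.nonempty_coe_sort.mp (NormedSpace.sphere_nonempty_rclike 𝕜 zero_le_one))
    (continuous_norm.comp T.continuous).continuousOn
  rw [mem_sphere_zero_iff_norm] at hx
  refine ⟨x, hx, le_antisymm (by simpa [hx] using T.le_opNorm x) ?_⟩
  exact T.opNorm_le_of_unit_norm (norm_nonneg _) fun y hy ↦
    hmax (mem_sphere_zero_iff_norm.mpr hy)

theorem opNorm_lt_iff_norm_apply_lt {T : E →L[𝕜] F} {c : ℝ} (hc : 0 < c) :
    ‖T‖ < c ↔ ∀ x : E, x ≠ 0 → ‖T x‖ < c * ‖x‖ := by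
  refine ⟨fun hT x hx ↦ ?_, fun h ↦ ?_⟩
  · calc ‖T x‖ ≤ ‖T‖ * ‖x‖ := T.le_opNorm x
      _ < c * ‖x‖ := by gcongr
  · cases subsingleton_or_nontrivial E with
    | inl _ => simpa [Subsingleton.elim T 0] using hc
    | inr _ =>
      obtain ⟨x, hx, hTx⟩ := T.exists_norm_eq_one_norm_apply_eq_opNorm
      simpa [hx, hTx] using h x (norm_ne_zero_iff.mp (by simp [hx]))

end ContinuousLinearMap

theorem EuclideanSpace.norm_toLp_sq {ι : Type*} [Fintype ι] (x : ι → ℝ) :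
    ‖WithLp.toLp 2 x‖ ^ 2 = x ⬝ᵥ x := by
  rw [← real_inner_self_eq_norm_sq, EuclideanSpace.inner_toLp_toLp, star_trivial]

namespace Matrix

theorem l2_opNorm_lt_iff {ι 𝕜 : Type*} [RCLike 𝕜] [Fintype ι] [DecidableEq ι]
    {A : Matrix ι ι 𝕜} {c : ℝ} (hc : 0 < c) :
    ‖A‖ < c ↔ ∀ x : ι → 𝕜, x ≠ 0 → ‖WithLp.toLp 2 (A *ᵥ x)‖ < c * ‖WithLp.toLp 2 x‖ := by
  rw [← l2_opNorm_toEuclideanCLM, ContinuousLinearMap.opNorm_lt_iff_norm_apply_lt hc]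
  exact (WithLp.equiv 2 (ι → 𝕜)).forall_congr_left.trans (by simp)

theorem l2_opNorm_transpose {ι : Type*} [Fintype ι] [DecidableEq ι] (A : Matrix ι ι ℝ) :
    ‖Aᵀ‖ = ‖A‖ := by
  rw [← conjTranspose_eq_transpose_of_trivial, l2_opNorm_conjTranspose]

end Matrix

theorem l2OpNorm_eq_norm {n : ℕ} (L : Matrix (Fin n) (Fin n) ℝ) : l2OpNorm L = ‖L‖ := rfl

theorem inv_smul_one_add_smul_mul_one_sub_smul {K A : Type*} [Field K] [Ring A] [Algebra K A]
    {ω : K} (hω : ω ≠ 0) (a b : A) :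
    ω⁻¹ • ((1 + ω • a) * (1 - ω • b)) = ω⁻¹ • (1 : A) + (a - b) - ω • (a * b) := by
  simp only [add_mul, mul_sub, one_mul, mul_one, smul_mul_smul_comm, smul_add, smul_sub,
    smul_smul, inv_mul_cancel₀ hω, one_smul, inv_mul_cancel_left₀ hω]
  abel

theorem Matrix.dotProduct_mulVec_inv_smul_one_add_smul_mul_one_sub_smul_transpose
    {ι K : Type*} [Fintype ι] [DecidableEq ι] [Field K]
    (L : Matrix ι ι K) {ω : K} (hω : ω ≠ 0) (x : ι → K) :
    x ⬝ᵥ (ω⁻¹ • ((1 + ω • L) * (1 - ω • Lᵀ))) *ᵥ x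
      = ω⁻¹ * (x ⬝ᵥ x) - ω * (Lᵀ *ᵥ x ⬝ᵥ Lᵀ *ᵥ x) := by
  have hskew : x ⬝ᵥ Lᵀ *ᵥ x = x ⬝ᵥ L *ᵥ x := dotProduct_transpose_mulVec L x x
  have hgram : x ⬝ᵥ (L * Lᵀ) *ᵥ x = Lᵀ *ᵥ x ⬝ᵥ Lᵀ *ᵥ x := by
    rw [← mulVec_mulVec, dotProduct_mulVec, ← mulVec_transpose]
  rw [inv_smul_one_add_smul_mul_one_sub_smul hω, sub_mulVec, add_mulVec, sub_mulVec,
    smul_mulVec, smul_mulVec, one_mulVec, dotProduct_sub, dotProduct_add, dotProduct_sub,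
    dotProduct_smul, dotProduct_smul, hskew, hgram, smul_eq_mul, smul_eq_mul, sub_self, add_zero]

section OrderedField

variable {K : Type*} [Field K] [LinearOrder K] [IsStrictOrderedRing K]

theorem inv_mul_sq_sub_mul_sq_pos_iff {ω a b : K} (hω : 0 < ω) (ha : 0 ≤ a) (hb : 0 ≤ b) :
    0 < ω⁻¹ * a ^ 2 - ω * b ^ 2 ↔ b < ω⁻¹ * a := by
  have hfactor : ω⁻¹ * a ^ 2 - ω * b ^ 2 = ω * ((ω⁻¹ * a) ^ 2 - b ^ 2) := by field_simp
  rw [hfactor, mul_pos_iff_of_pos_left hω, sub_pos, sq_lt_sq₀ hb (by positivity)]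

theorem lt_inv_iff_eq_zero_or_lt_one_div {a b : K} (ha : 0 ≤ a) (hb : 0 < b) :
    a < b⁻¹ ↔ a = 0 ∨ b < 1 / a := by
  rcases ha.eq_or_lt with rfl | ha
  · simpa using hb
  · rw [lt_one_div hb ha, one_div, or_iff_right ha.ne']

end OrderedField

theorem botchev_golub_posdef_general {n : ℕ}
    (Ls Us : Matrix (Fin n) (Fin n) ℝ)
    (hUs : Us = -Lsᵀ)
    (ω : ℝ) (hω : 0 < ω)
    (P : Matrix (Fin n) (Fin n) ℝ)
    (hP : P = ω⁻¹ • ((1 + ω • Ls) * (1 + ω • Us))) :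
    (∀ x : Fin n → ℝ, x ≠ 0 → 0 < x ⬝ᵥ P.mulVec x) ↔
      (Ls = 0 ∨ ω < 1 / l2OpNorm Ls) := by
  have hquad (x : Fin n → ℝ) : x ⬝ᵥ P *ᵥ x
      = ω⁻¹ * ‖WithLp.toLp 2 x‖ ^ 2 - ω * ‖WithLp.toLp 2 (Lsᵀ *ᵥ x)‖ ^ 2 := by
    rw [hP, hUs, smul_neg, ← sub_eq_add_neg,
      dotProduct_mulVec_inv_smul_one_add_smul_mul_one_sub_smul_transpose Ls hω.ne',
      EuclideanSpace.norm_toLp_sq, EuclideanSpace.norm_toLp_sq]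
  calc (∀ x : Fin n → ℝ, x ≠ 0 → 0 < x ⬝ᵥ P *ᵥ x)
      ↔ ∀ x : Fin n → ℝ, x ≠ 0 →
          ‖WithLp.toLp 2 (Lsᵀ *ᵥ x)‖ < ω⁻¹ * ‖WithLp.toLp 2 x‖ := by
        simp only [hquad, inv_mul_sq_sub_mul_sq_pos_iff hω (norm_nonneg _) (norm_nonneg _)]
    _ ↔ ‖Lsᵀ‖ < ω⁻¹ := (l2_opNorm_lt_iff (inv_pos.mpr hω)).symm
    _ ↔ Ls = 0 ∨ ω < 1 / l2OpNorm Ls := by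
      rw [l2_opNorm_transpose, lt_inv_iff_eq_zero_or_lt_one_div (norm_nonneg _) hω,
        norm_eq_zero, l2OpNorm_eq_norm]

theorem botchev_golub_posdef {n : ℕ}
    (S Ls Us : Matrix (Fin n) (Fin n) ℝ)
    (hS : Sᵀ = -S)
    (hLs : ∀ i j : Fin n, i ≤ j → Ls i j = 0)
    (hUs : Us = -Lsᵀ)
    (hSsum : S = Ls + Us)
    (ω : ℝ) (hω : 0 < ω)
    (P : Matrix (Fin n) (Fin n) ℝ)
    (hP : P = ω⁻¹ • ((1 + ω • Ls) * (1 + ω • Us))) :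
    (∀ x : Fin n → ℝ, x ≠ 0 → 0 < x ⬝ᵥ P.mulVec x) ↔
      (Ls = 0 ∨ ω < 1 / l2OpNorm Ls) :=
  botchev_golub_posdef_general Ls Us hUs ω hω P hP
end
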